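/- arXiv:1710.01165 — 6 statements merged into one kernel-verified Lean document; each statement's English description precedes it below -/
import Mathlib

section
/- Let A be an associative algebra and r = Σᵢ aᵢ ⊗ bᵢ ∈ A ⊗ A a solution of the associative Yang–Baxter equation r₁₃r₁₂ − r₁₂r₂₃ + r₂₃r₁₃ = 0. Then the linear map R: A → A defined by R(x) = Σᵢ aᵢ x bᵢ is a Rota–Baxter operator of weight 0 on A. -/
/-!
Apply to the associative Yang–Baxter equation the linear map `u ⊗ v ⊗ w ↦ u x v y w`.
It sends `r₁₃r₁₂`, `r₁₂r₂₃` and `r₂₃r₁₃` to `R(R(x) y)`, `R(x) R(y)` and `R(x R(y))`,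
so the equation becomes the Rota–Baxter identity.
-/

open TensorProduct

section

variable {k A : Type*} [CommSemiring k] [Semiring A] [Algebra k A]

noncomputable def contractWith (x y : A) : A ⊗[k] (A ⊗[k] A) →ₗ[k] A :=
  lift <| (LinearMap.mul k A ∘ₗ LinearMap.mulRight k x).compl₂
    (lift (LinearMap.mul k A ∘ₗ LinearMap.mulRight k y))

theorem contractWith_tmul (x y u v w : A) :
    contractWith (k := k) x y (u ⊗ₜ (v ⊗ₜ w)) = u * x * (v * y * w) := rfl

variable {ι : Type*} (s : Finset ι) (a b : ι → A) (x y : A)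

def sandwichSum (x : A) : A := ∑ i ∈ s, a i * x * b i

theorem contractWith_r13_mul_r12 :
    contractWith (k := k) x y ((∑ i ∈ s, a i ⊗ₜ ((1 : A) ⊗ₜ b i)) *
      ∑ i ∈ s, a i ⊗ₜ (b i ⊗ₜ (1 : A))) = sandwichSum s a b (sandwichSum s a b x * y) := by
  simp only [Finset.sum_mul, Finset.mul_sum, Algebra.TensorProduct.tmul_mul_tmul, map_sum,
    contractWith_tmul, sandwichSum, one_mul, mul_one, mul_assoc]
  exact Finset.sum_comm

theorem contractWith_r12_mul_r23 :
    contractWith (k := k) x y ((∑ i ∈ s, a i ⊗ₜ (b i ⊗ₜ (1 : A))) *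
      ∑ i ∈ s, (1 : A) ⊗ₜ (a i ⊗ₜ b i)) = sandwichSum s a b x * sandwichSum s a b y := by
  simp only [Finset.sum_mul, Finset.mul_sum, Algebra.TensorProduct.tmul_mul_tmul, map_sum,
    contractWith_tmul, sandwichSum, one_mul, mul_one, mul_assoc]

theorem contractWith_r23_mul_r13 :
    contractWith (k := k) x y ((∑ i ∈ s, (1 : A) ⊗ₜ (a i ⊗ₜ b i)) *
      ∑ i ∈ s, a i ⊗ₜ ((1 : A) ⊗ₜ b i)) = sandwichSum s a b (x * sandwichSum s a b y) := by
  simp only [Finset.sum_mul, Finset.mul_sum, Algebra.TensorProduct.tmul_mul_tmul, map_sum,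
    contractWith_tmul, sandwichSum, one_mul, mul_one, mul_assoc]

end

/-- If `r = Σ aᵢ ⊗ bᵢ` is a solution of the associative Yang–Baxter equation on
an associative algebra `A`, then `R(x) = Σ aᵢ x bᵢ` is a Rota–Baxter operator of
weight 0 on `A`. -/
theorem aybe_gives_RB_weight_zero {k A : Type*} [Field k] [Ring A] [Algebra k A]
    {ι : Type*} (s : Finset ι) (a b : ι → A)
    (r12 r13 r23 : A ⊗[k] (A ⊗[k] A))
    (h12 : r12 = ∑ i ∈ s, a i ⊗ₜ (b i ⊗ₜ (1 : A)))
    (h13 : r13 = ∑ i ∈ s, a i ⊗ₜ ((1 : A) ⊗ₜ b i))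
    (h23 : r23 = ∑ i ∈ s, (1 : A) ⊗ₜ (a i ⊗ₜ b i))
    (hAYBE : r13 * r12 - r12 * r23 + r23 * r13 = 0)
    (R : A →ₗ[k] A) (hR : ∀ x : A, R x = ∑ i ∈ s, a i * x * b i) :
    ∀ x y : A, R x * R y = R (R x * y + x * R y) := by
  intro x y
  have hR_eq : ⇑R = sandwichSum s a b := funext hR
  have key := congrArg (contractWith x y) hAYBE
  subst h12 h13 h23
  rw [map_add, map_sub, map_zero, contractWith_r13_mul_r12, contractWith_r12_mul_r23,
    contractWith_r23_mul_r13, sub_add_eq_add_sub, sub_eq_zero] at key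
  rw [map_add, hR_eq, key]
end

section
/- Let e, f, h be the standard basis of sl₂(ℂ) with [h,e] = 2e, [h,f] = −2f, [e,f] = h. The linear map R: sl₂(ℂ) → sl₂(ℂ) defined by R(e) = 0, R(f) = 4h, R(h) = −8e is a Rota–Baxter operator of weight 0 on the Lie algebra sl₂(ℂ). -/
/-!
The Rota–Baxter defect `D(x, y) = ⁅R x, R y⁆ - R (⁅R x, y⁆ + ⁅x, R y⁆)` is bilinear and
alternating, so `R` is Rota–Baxter as soon as `D` vanishes on pairs `(b i, b j)` of basis vectors
with `i < j`. For `sl₂` these are the three pairs `(e, f)`, `(e, h)`, `(f, h)`, each a short bracket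
computation.
-/

namespace LieAlgebra

variable {K L : Type*} [CommRing K] [LieRing L] [LieAlgebra K L]

/-- Rota–Baxter operators of weight 0. -/
def IsRotaBaxter (R : L →ₗ[K] L) : Prop :=
  ∀ x y : L, ⁅R x, R y⁆ = R (⁅R x, y⁆ + ⁅x, R y⁆)

def rotaBaxterDefect (R : L →ₗ[K] L) : L →ₗ[K] L →ₗ[K] L :=
  let B : L →ₗ[K] L →ₗ[K] L := LieModule.toEnd K L L
  B.compl₁₂ R R - (B ∘ₗ R + B.compl₂ R).compr₂ R

variable (R : L →ₗ[K] L)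

@[simp]
theorem rotaBaxterDefect_apply (x y : L) :
    rotaBaxterDefect R x y = ⁅R x, R y⁆ - R (⁅R x, y⁆ + ⁅x, R y⁆) :=
  rfl

theorem rotaBaxterDefect_self (x : L) : rotaBaxterDefect R x x = 0 := by
  rw [rotaBaxterDefect_apply, lie_self, ← lie_skew, neg_add_cancel, map_zero, sub_zero]

theorem rotaBaxterDefect_swap (x y : L) :
    rotaBaxterDefect R y x = -rotaBaxterDefect R x y := by
  rw [rotaBaxterDefect_apply, rotaBaxterDefect_apply, ← lie_skew (R y) (R x),
    ← lie_skew (R y) x, ← lie_skew y (R x)]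
  simp only [map_add, map_neg]
  abel

theorem isRotaBaxter_iff_rotaBaxterDefect_eq_zero :
    IsRotaBaxter R ↔ rotaBaxterDefect R = 0 := by
  simp only [IsRotaBaxter, LinearMap.ext_iff₂, rotaBaxterDefect_apply, LinearMap.zero_apply,
    sub_eq_zero]

theorem isRotaBaxter_of_basis {ι : Type*} [LinearOrder ι] (b : Module.Basis ι K L)
    (hb : ∀ i j, i < j → ⁅R (b i), R (b j)⁆ = R (⁅R (b i), b j⁆ + ⁅b i, R (b j)⁆)) :
    IsRotaBaxter R := by
  rw [isRotaBaxter_iff_rotaBaxterDefect_eq_zero]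
  refine b.ext fun i => b.ext fun j => ?_
  rw [LinearMap.zero_apply, LinearMap.zero_apply]
  rcases lt_trichotomy i j with hij | rfl | hji
  · rw [rotaBaxterDefect_apply, hb i j hij, sub_self]
  · exact rotaBaxterDefect_self R (b i)
  · rw [rotaBaxterDefect_swap, rotaBaxterDefect_apply, hb j i hji, sub_self, neg_zero]

end LieAlgebra

open LieAlgebra in
theorem sl2_RB_operator_general {L : Type*} [LieRing L] [LieAlgebra ℂ L]
    (b : Module.Basis (Fin 3) ℂ L) (e f h : L)
    (hbe : b 0 = e) (hbf : b 1 = f) (hbh : b 2 = h)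
    (hhe : ⁅h, e⁆ = (2 : ℂ) • e) (hef : ⁅e, f⁆ = h)
    (R : L →ₗ[ℂ] L) (hRe : R e = 0) (hRf : R f = (4 : ℂ) • h) (hRh : R h = (-8 : ℂ) • e) :
    ∀ x y : L, ⁅R x, R y⁆ = R (⁅R x, y⁆ + ⁅x, R y⁆) := by
  have heh : ⁅e, h⁆ = (-2 : ℂ) • e := by rw [← lie_skew, hhe]; module
  have hfe : ⁅f, e⁆ = -h := by rw [← lie_skew, hef]
  refine isRotaBaxter_of_basis R b fun i j hij => ?_
  fin_cases i <;> fin_cases j <;> simp at hij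
  · simp [hbe, hbf, hRe, hRf, heh]
  · simp [hbe, hbh, hRe, hRh]
  · simp [hbf, hbh, hRf, hRh, hfe, hhe]
    module

/-- On `sl₂(ℂ)` with standard basis `e, f, h` (`[h,e] = 2e`, `[h,f] = -2f`,
`[e,f] = h`), the map `R(e) = 0`, `R(f) = 4h`, `R(h) = -8e` is a Rota–Baxter
operator of weight 0. -/
theorem sl2_RB_operator {L : Type*} [LieRing L] [LieAlgebra ℂ L]
    (b : Module.Basis (Fin 3) ℂ L) (e f h : L)
    (hbe : b 0 = e) (hbf : b 1 = f) (hbh : b 2 = h)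
    (hhe : ⁅h, e⁆ = (2 : ℂ) • e) (hhf : ⁅h, f⁆ = (-2 : ℂ) • f) (hef : ⁅e, f⁆ = h)
    (R : L →ₗ[ℂ] L) (hRe : R e = 0) (hRf : R f = (4 : ℂ) • h) (hRh : R h = (-8 : ℂ) • e) :
    ∀ x y : L, ⁅R x, R y⁆ = R (⁅R x, y⁆ + ⁅x, R y⁆) :=
  sl2_RB_operator_general b e f h hbe hbf hbh hhe hef R hRe hRf hRh
end

section
/- Let ⟨A,·⟩ be a commutative associative algebra and R a Rota–Baxter operator of weight 1 on A. Then A with the two products x ≻ y := R(x)·y and x ⊥ y := x·y is a postcommutative algebra: ⊥ is associative and commutative, and (x ≻ y + y ≻ x + x ⊥ y) ≻ z = x ≻ (y ≻ z), x ≻ (y ⊥ z) = (x ≻ y) ⊥ z, and (x ≻ y) ⊥ z = y ⊥ (x ≻ z) hold for all x,y,z. -/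
/-- A commutative algebra with a Rota–Baxter operator of weight 1 is a
postcommutative algebra under `x ≻ y := R x * y` and `x ⊥ y := x * y`. -/
theorem RB_weight_one_gives_postcommutative {k A : Type*} [Field k]
    [NonUnitalCommRing A] [Module k A] (R : A →ₗ[k] A)
    (hR : ∀ x y : A, R x * R y = R (R x * y + x * R y + x * y)) :
    (∀ x y : A, x * y = y * x) ∧
    (∀ x y z : A, x * y * z = x * (y * z)) ∧
    (∀ x y z : A, R (R x * y + R y * x + x * y) * z = R x * (R y * z)) ∧
    (∀ x y z : A, R x * (y * z) = (R x * y) * z) ∧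
    (∀ x y z : A, (R x * y) * z = y * (R x * z)) := by
  refine ⟨mul_comm, mul_assoc, ?_, ?_, ?_⟩
  · intro x y z
    rw [mul_comm (R y) x, ← hR x y, mul_assoc]
  · intro x y z
    exact (mul_assoc _ _ _).symm
  · intro x y z
    rw [mul_comm (R x) y, mul_assoc]
end

section
/- Let V be a vector space over a field k and consider the reduced tensor space T̄(V) = ⊕_{n≥1} V^{⊗n} with the product (v₁⊗…⊗v_p) ≻ (v_{p+1}⊗…⊗v_{p+q}) := ((v₁⊗…⊗v_p) ⧢ (v_{p+1}⊗…⊗v_{p+q−1})) ⊗ v_{p+q}, where ⧢ denotes the shuffle product. Then ⟨T̄(V), ≻⟩ is a precommutative (Zinbiel) algebra. -/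
/-!
Extend `⧢` and `≻` bilinearly to the free module on words and write `f·l` for `f` with the
letter `l` appended. Then `f ≻ g·l = (f ⧢ g)·l` and `f ≻ [] = 0`, so `(f ⧢ g) ≻ h = f ≻ (g ≻ h)`
is associativity of the shuffle product. On the other hand the shuffle product also obeys the
last-letter recursion `f·x ⧢ g·y = (f·x ⧢ g)·y + (f ⧢ g·y)·x`, which together with commutativity
gives `f ≻ g + g ≻ f = f ⧢ g` as soon as every word of `f` is nonempty. Substituting this into
`(x ≻ y + y ≻ x) ≻ z` yields the Zinbiel identity.
-/

/-- The shuffle of two words, as an element of the free module on words. -/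
noncomputable def shuffleWord {k ι : Type*} [Field k] : List ι → List ι → (List ι →₀ k)
  | [], b => Finsupp.single b 1
  | a, [] => Finsupp.single a 1
  | x :: xs, y :: ys =>
      (shuffleWord xs (y :: ys)).mapDomain (x :: ·) +
      (shuffleWord (x :: xs) ys).mapDomain (y :: ·)
  termination_by a b => a.length + b.length

/-- `(v₁⊗…⊗v_p) ≻ (v_{p+1}⊗…⊗v_{p+q}) = ((v₁⊗…⊗v_p) ⧢ (v_{p+1}⊗…⊗v_{p+q-1})) ⊗ v_{p+q}`
on words. -/
noncomputable def preMulWord {k ι : Type*} [Field k] (a b : List ι) : List ι →₀ k :=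
  match b.getLast? with
  | none => 0
  | some l => (shuffleWord (k := k) a b.dropLast).mapDomain (· ++ [l])

/-- The bilinear extension of `preMulWord` to the free module on words. -/
noncomputable def preMul {k ι : Type*} [Field k] (f g : List ι →₀ k) : List ι →₀ k :=
  f.sum fun u cu => g.sum fun v cv => (cu * cv) • preMulWord u v

/-- The reduced tensor space `T̄(V) = ⊕_{n ≥ 1} V^{⊗n}`: the span of nonempty
words in a basis `ι` of `V`. -/
noncomputable def reducedTensor (k ι : Type*) [Field k] : Submodule k (List ι →₀ k) :=
  Submodule.span k {f | ∃ w : List ι, w ≠ [] ∧ f = Finsupp.single w 1}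

section
variable {k ι : Type*} [Field k]

noncomputable def consₗ (x : ι) : (List ι →₀ k) →ₗ[k] (List ι →₀ k) :=
  Finsupp.lmapDomain k k (x :: ·)

noncomputable def snocₗ (x : ι) : (List ι →₀ k) →ₗ[k] (List ι →₀ k) :=
  Finsupp.lmapDomain k k (· ++ [x])

noncomputable def shuffle : (List ι →₀ k) →ₗ[k] (List ι →₀ k) →ₗ[k] (List ι →₀ k) :=
  Finsupp.linearCombination k fun a => Finsupp.linearCombination k (shuffleWord a)

@[simp] lemma shuffle_single_single (a b : List ι) :
    shuffle (Finsupp.single a (1 : k)) (Finsupp.single b 1) = shuffleWord a b := by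
  simp [shuffle]

lemma single_cons_eq_consₗ (x : ι) (w : List ι) :
    Finsupp.single (x :: w) (1 : k) = consₗ x (Finsupp.single w 1) := by
  simp [consₗ]

lemma single_concat_eq_snocₗ (x : ι) (w : List ι) :
    Finsupp.single (w ++ [x]) (1 : k) = snocₗ x (Finsupp.single w 1) := by
  simp [snocₗ]

lemma shuffleWord_nil_left (b : List ι) : shuffleWord (k := k) [] b = Finsupp.single b 1 := by
  rw [shuffleWord]

lemma shuffleWord_nil_right (a : List ι) : shuffleWord (k := k) a [] = Finsupp.single a 1 := by
  cases a <;> simp [shuffleWord]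

lemma shuffleWord_cons_cons (x y : ι) (xs ys : List ι) :
    shuffleWord (k := k) (x :: xs) (y :: ys) =
      consₗ x (shuffleWord xs (y :: ys)) + consₗ y (shuffleWord (x :: xs) ys) := by
  rw [shuffleWord]; rfl

lemma shuffle_nil_left (g : List ι →₀ k) : shuffle (Finsupp.single [] 1) g = g := by
  suffices shuffle (Finsupp.single [] 1) = (LinearMap.id : (List ι →₀ k) →ₗ[k] _) from
    LinearMap.congr_fun this g
  ext b
  simp [shuffleWord_nil_left]

lemma shuffle_nil_right (f : List ι →₀ k) : shuffle f (Finsupp.single [] 1) = f := by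
  suffices shuffle.flip (Finsupp.single [] 1) = (LinearMap.id : (List ι →₀ k) →ₗ[k] _) from
    LinearMap.congr_fun this f
  ext a
  simp [shuffleWord_nil_right]

lemma shuffle_consₗ_consₗ (x y : ι) (f g : List ι →₀ k) :
    shuffle (consₗ x f) (consₗ y g) =
      consₗ x (shuffle f (consₗ y g)) + consₗ y (shuffle (consₗ x f) g) := by
  suffices shuffle.compl₁₂ (consₗ x) (consₗ y) =
      (shuffle.compl₂ (consₗ y)).compr₂ (consₗ x) + (shuffle ∘ₗ consₗ x).compr₂ (consₗ y) from
    LinearMap.congr_fun₂ this f g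
  ext a b
  simp [← single_cons_eq_consₗ, shuffleWord_cons_cons]

lemma shuffle_shuffle_consₗ (x y z : ι) (f g h : List ι →₀ k) :
    shuffle (shuffle (consₗ x f) (consₗ y g)) (consₗ z h) =
      consₗ x (shuffle (shuffle f (consₗ y g)) (consₗ z h)) +
      consₗ y (shuffle (shuffle (consₗ x f) g) (consₗ z h)) +
      consₗ z (shuffle (shuffle (consₗ x f) (consₗ y g)) h) := by
  simp only [shuffle_consₗ_consₗ x y f g, shuffle_consₗ_consₗ x z, shuffle_consₗ_consₗ y z,
    map_add, LinearMap.add_apply]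
  abel

lemma shuffle_consₗ_shuffle (x y z : ι) (f g h : List ι →₀ k) :
    shuffle (consₗ x f) (shuffle (consₗ y g) (consₗ z h)) =
      consₗ x (shuffle f (shuffle (consₗ y g) (consₗ z h))) +
      consₗ y (shuffle (consₗ x f) (shuffle g (consₗ z h))) +
      consₗ z (shuffle (consₗ x f) (shuffle (consₗ y g) h)) := by
  simp only [shuffle_consₗ_consₗ y z g h, shuffle_consₗ_consₗ x y, shuffle_consₗ_consₗ x z,
    map_add]
  abel

lemma shuffle_assoc_single (a b c : List ι) :
    shuffle (shuffle (Finsupp.single a (1 : k)) (Finsupp.single b 1)) (Finsupp.single c 1) =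
      shuffle (Finsupp.single a 1) (shuffle (Finsupp.single b 1) (Finsupp.single c 1)) := by
  induction a generalizing b c with
  | nil => simp only [shuffle_nil_left]
  | cons x xs iha =>
    induction b generalizing c with
    | nil => simp only [shuffle_nil_left, shuffle_nil_right]
    | cons y ys ihb =>
      induction c with
      | nil => simp only [shuffle_nil_right]
      | cons z zs ihc =>
        have ih₁ := iha (y :: ys) (z :: zs)
        have ih₂ := ihb (z :: zs)
        simp only [single_cons_eq_consₗ] at ih₁ ih₂ ihc ⊢
        rw [shuffle_shuffle_consₗ, shuffle_consₗ_shuffle, ih₁, ih₂, ihc]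

lemma shuffle_assoc (f g h : List ι →₀ k) :
    shuffle (shuffle f g) h = shuffle f (shuffle g h) := by
  suffices (shuffle (k := k) (ι := ι)).compr₂ shuffle =
      (LinearMap.llcomp k _ _ _ ∘ₗ shuffle).compl₂ shuffle from
    LinearMap.congr_fun (LinearMap.congr_fun₂ this f g) h
  ext a b c : 6
  simpa using shuffle_assoc_single (k := k) a b c

lemma shuffleWord_comm (a b : List ι) : shuffleWord (k := k) a b = shuffleWord b a := by
  induction a generalizing b with
  | nil => rw [shuffleWord_nil_left, shuffleWord_nil_right]
  | cons x xs ihx =>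
    induction b with
    | nil => rw [shuffleWord_nil_left, shuffleWord_nil_right]
    | cons y ys ihy => rw [shuffleWord_cons_cons, shuffleWord_cons_cons, ihx, ihy, add_comm]

lemma shuffle_comm (f g : List ι →₀ k) : shuffle f g = shuffle g f := by
  suffices (shuffle (k := k) (ι := ι)).flip = shuffle from LinearMap.congr_fun₂ this g f
  ext a b : 4
  simp [shuffleWord_comm]

lemma snocₗ_consₗ (x y : ι) (f : List ι →₀ k) : snocₗ y (consₗ x f) = consₗ x (snocₗ y f) := by
  simp only [consₗ, snocₗ, Finsupp.lmapDomain_apply, ← Finsupp.mapDomain_comp]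
  rfl

lemma snocₗ_single_nil (x : ι) :
    snocₗ x (Finsupp.single [] (1 : k)) = consₗ x (Finsupp.single [] 1) := by
  simp [consₗ, snocₗ]

lemma shuffle_snocₗ_snocₗ (x y : ι) (f g : List ι →₀ k) :
    shuffle (snocₗ x f) (snocₗ y g) =
      snocₗ y (shuffle (snocₗ x f) g) + snocₗ x (shuffle f (snocₗ y g)) := by
  suffices shuffle.compl₁₂ (snocₗ x) (snocₗ y) =
      (shuffle ∘ₗ snocₗ x).compr₂ (snocₗ y) + (shuffle.compl₂ (snocₗ y)).compr₂ (snocₗ x) from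
    LinearMap.congr_fun₂ this f g
  ext a b : 4
  simp only [LinearMap.compl₁₂_apply, LinearMap.add_apply, LinearMap.compr₂_apply,
    LinearMap.comp_apply, LinearMap.compl₂_apply, Finsupp.lsingle_apply]
  induction a generalizing b with
  | nil =>
    induction b with
    | nil =>
      simp only [snocₗ_single_nil, shuffle_consₗ_consₗ, shuffle_nil_left, shuffle_nil_right,
        snocₗ_consₗ]
    | cons v vs ih =>
      simp only [single_cons_eq_consₗ, snocₗ_single_nil, snocₗ_consₗ] at ih ⊢
      rw [shuffle_consₗ_consₗ, ih]
      simp only [shuffle_consₗ_consₗ, shuffle_nil_left, map_add, snocₗ_consₗ]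
      abel
  | cons u us ihu =>
    induction b with
    | nil =>
      have := ihu []
      simp only [single_cons_eq_consₗ, snocₗ_single_nil, snocₗ_consₗ] at this ⊢
      rw [shuffle_consₗ_consₗ, this]
      simp only [shuffle_consₗ_consₗ, shuffle_nil_right, map_add, snocₗ_consₗ]
      abel
    | cons v vs ihv =>
      have := ihu (v :: vs)
      simp only [single_cons_eq_consₗ, snocₗ_consₗ] at this ihv ⊢
      rw [shuffle_consₗ_consₗ, this, ihv]
      simp only [shuffle_consₗ_consₗ, map_add, snocₗ_consₗ]
      abel

noncomputable def preMulₗ : (List ι →₀ k) →ₗ[k] (List ι →₀ k) →ₗ[k] (List ι →₀ k) :=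
  Finsupp.linearCombination k fun a => Finsupp.linearCombination k (preMulWord a)

lemma preMul_eq_preMulₗ (f g : List ι →₀ k) : preMul f g = preMulₗ f g := by
  simp [preMul, preMulₗ, Finsupp.linearCombination_apply, Finsupp.smul_sum, smul_smul]

lemma preMulₗ_single_nil (f : List ι →₀ k) : preMulₗ f (Finsupp.single [] 1) = 0 := by
  suffices (preMulₗ (k := k) (ι := ι)).flip (Finsupp.single [] 1) = 0 from
    LinearMap.congr_fun this f
  ext a : 2
  simp [preMulₗ, preMulWord]

lemma preMulₗ_snocₗ (x : ι) (f g : List ι →₀ k) :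
    preMulₗ f (snocₗ x g) = snocₗ x (shuffle f g) := by
  suffices preMulₗ.compl₂ (snocₗ x) = shuffle.compr₂ (snocₗ x) from LinearMap.congr_fun₂ this f g
  ext a b : 4
  simp [preMulₗ, preMulWord, snocₗ]

lemma preMulₗ_shuffle (f g h : List ι →₀ k) :
    preMulₗ (shuffle f g) h = preMulₗ f (preMulₗ g h) := by
  suffices preMulₗ (shuffle f g) = preMulₗ f ∘ₗ preMulₗ g from LinearMap.congr_fun this h
  ext w : 2
  rcases List.eq_nil_or_concat w with rfl | ⟨w, x, rfl⟩
  · simp [preMulₗ_single_nil]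
  · simp [single_concat_eq_snocₗ, preMulₗ_snocₗ, shuffle_assoc]

lemma preMulₗ_add_preMulₗ_swap_snocₗ (x : ι) (f g : List ι →₀ k) :
    preMulₗ (snocₗ x f) g + preMulₗ g (snocₗ x f) = shuffle (snocₗ x f) g := by
  suffices preMulₗ (snocₗ x f) + preMulₗ.flip (snocₗ x f) = shuffle (snocₗ x f) from
    LinearMap.congr_fun this g
  ext w : 2
  rcases List.eq_nil_or_concat w with rfl | ⟨w, y, rfl⟩
  · simp [preMulₗ_single_nil, preMulₗ_snocₗ, shuffle_nil_left, shuffle_nil_right]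
  · simp [single_concat_eq_snocₗ, preMulₗ_snocₗ, shuffle_snocₗ_snocₗ, shuffle_comm (snocₗ y _) f]

lemma preMulₗ_add_preMulₗ_swap {f : List ι →₀ k} (hf : f ∈ reducedTensor k ι)
    (g : List ι →₀ k) : preMulₗ f g + preMulₗ g f = shuffle f g := by
  suffices (preMulₗ + preMulₗ.flip : (List ι →₀ k) →ₗ[k] _) f = shuffle f from
    LinearMap.congr_fun this g
  refine LinearMap.eqOn_span ?_ hf
  rintro _ ⟨w, hw, rfl⟩
  obtain ⟨w, x, rfl⟩ := (List.eq_nil_or_concat w).resolve_left hw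
  rw [List.concat_eq_append, single_concat_eq_snocₗ]
  exact LinearMap.ext (preMulₗ_add_preMulₗ_swap_snocₗ x _)

end

/-- The reduced tensor space with the half-shuffle product `≻` is a
precommutative (Zinbiel) algebra. -/
theorem reducedTensor_preMul_zinbiel {k ι : Type*} [Field k] :
    ∀ x ∈ reducedTensor k ι, ∀ y ∈ reducedTensor k ι, ∀ z ∈ reducedTensor k ι,
      preMul (preMul x y + preMul y x) z = preMul x (preMul y z) := by
  intro x hx y _ z _
  simp only [preMul_eq_preMulₗ]
  rw [preMulₗ_add_preMulₗ_swap hx, preMulₗ_shuffle]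
end

section
/- Let g be a finite-dimensional semisimple Lie algebra over ℂ with Killing form ⟨·,·⟩, and let r = Σᵢ aᵢ ⊗ bᵢ ∈ g ⊗ g be a skew-symmetric solution of the classical Yang–Baxter equation [r₁₂,r₁₃] + [r₁₂,r₂₃] + [r₁₃,r₂₃] = 0. Then the linear map R: g → g defined by R(x) = Σᵢ ⟨aᵢ,x⟩ bᵢ is a Rota–Baxter operator of weight 0 on g. -/
/-!
Evaluate the classical Yang–Baxter expression, which lives in `U(g) ⊗ U(g) ⊗ U(g)`, against `x` in
the first leg and `y` in the second (through the Killing form) and through the adjoint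
representation in the third. The three brackets become `ad` of `-R⁅x, R y⁆`, `-R⁅R x, y⁆` and
`⁅R x, R y⁆`, the first one by skew-symmetry of `r` and invariance of the Killing form. So `ad`
kills the Rota–Baxter defect, and `ad` is injective since `g` is semisimple.
-/

open TensorProduct LieAlgebra

lemma sum_apply_smul_of_skew {R M κ : Type*} [CommRing R] [AddCommGroup M] [Module R M]
    {s : Finset κ} {a b : κ → M} (hskew : ∑ i ∈ s, a i ⊗ₜ[R] b i = -∑ i ∈ s, b i ⊗ₜ[R] a i)
    (f : M →ₗ[R] R) : ∑ i ∈ s, f (b i) • a i = -∑ i ∈ s, f (a i) • b i := by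
  simpa using congrArg ((TensorProduct.rid R M).toLinearMap ∘ₗ f.lTensor M) hskew

namespace ClassicalYangBaxter

variable {R L κ : Type*} [CommRing R] [LieRing L] [LieAlgebra R L]

local notation "𝓤" => UniversalEnvelopingAlgebra R L
local notation "ιU" => UniversalEnvelopingAlgebra.ι R (L := L)

section Legs

variable (R) in
noncomputable def leg₁₂ (s : Finset κ) (a b : κ → L) : 𝓤 ⊗[R] (𝓤 ⊗[R] 𝓤) :=
  ∑ i ∈ s, ιU (a i) ⊗ₜ (ιU (b i) ⊗ₜ 1)

variable (R) in
noncomputable def leg₁₃ (s : Finset κ) (a b : κ → L) : 𝓤 ⊗[R] (𝓤 ⊗[R] 𝓤) :=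
  ∑ i ∈ s, ιU (a i) ⊗ₜ (1 ⊗ₜ ιU (b i))

variable (R) in
noncomputable def leg₂₃ (s : Finset κ) (a b : κ → L) : 𝓤 ⊗[R] (𝓤 ⊗[R] 𝓤) :=
  ∑ i ∈ s, 1 ⊗ₜ (ιU (a i) ⊗ₜ ιU (b i))

variable (s : Finset κ) (a b : κ → L)

lemma lie_leg₁₂_leg₁₃ : ⁅leg₁₂ R s a b, leg₁₃ R s a b⁆ =
    ∑ i ∈ s, ∑ j ∈ s, ιU ⁅a i, a j⁆ ⊗ₜ (ιU (b i) ⊗ₜ ιU (b j)) := by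
  simp only [leg₁₂, leg₁₃, Ring.lie_def, Finset.sum_mul_sum, Algebra.TensorProduct.tmul_mul_tmul,
    one_mul, mul_one, LieHom.map_lie, sub_tmul, Finset.sum_sub_distrib]
  congr 1
  exact Finset.sum_comm

lemma lie_leg₁₂_leg₂₃ : ⁅leg₁₂ R s a b, leg₂₃ R s a b⁆ =
    ∑ i ∈ s, ∑ j ∈ s, ιU (a i) ⊗ₜ (ιU ⁅b i, a j⁆ ⊗ₜ ιU (b j)) := by
  simp only [leg₁₂, leg₂₃, Ring.lie_def, Finset.sum_mul_sum, Algebra.TensorProduct.tmul_mul_tmul,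
    one_mul, mul_one, LieHom.map_lie, sub_tmul, tmul_sub, Finset.sum_sub_distrib]
  congr 1
  exact Finset.sum_comm

lemma lie_leg₁₃_leg₂₃ : ⁅leg₁₃ R s a b, leg₂₃ R s a b⁆ =
    ∑ i ∈ s, ∑ j ∈ s, ιU (a i) ⊗ₜ (ιU (a j) ⊗ₜ ιU ⁅b i, b j⁆) := by
  simp only [leg₁₃, leg₂₃, Ring.lie_def, Finset.sum_mul_sum, Algebra.TensorProduct.tmul_mul_tmul,
    one_mul, mul_one, LieHom.map_lie, tmul_sub, Finset.sum_sub_distrib]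
  congr 1
  exact Finset.sum_comm

end Legs

section Evaluation

variable (R L) in
noncomputable def adU : 𝓤 →ₐ[R] Module.End R L :=
  UniversalEnvelopingAlgebra.lift R (ad R L)

lemma adU_ι (w : L) : adU R L (ιU w) = ad R L w :=
  UniversalEnvelopingAlgebra.lift_ι_apply R _ w

/-- Extends `w ↦ κ(w, z)` from `L` to `𝓤`, so that the first two legs can be paired with `x` and `y`
although no projection `𝓤 → L` is at hand. -/
noncomputable def killingPairing (z : L) : 𝓤 →ₗ[R] R :=
  LinearMap.trace R L ∘ₗ LinearMap.mulRight R (ad R L z) ∘ₗ (adU R L).toLinearMap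

lemma killingPairing_ι (z w : L) : killingPairing z (ιU w) = killingForm R L w z := by
  simp only [killingPairing, LinearMap.comp_apply, AlgHom.toLinearMap_apply, adU_ι,
    LinearMap.mulRight_apply, Module.End.mul_eq_comp, killingForm_apply_apply]

noncomputable def tripleEval (x y : L) : 𝓤 ⊗[R] (𝓤 ⊗[R] 𝓤) →ₗ[R] Module.End R L :=
  (TensorProduct.lid R _).toLinearMap ∘ₗ TensorProduct.map (killingPairing x)
    ((TensorProduct.lid R _).toLinearMap ∘ₗ
      TensorProduct.map (killingPairing y) (adU R L).toLinearMap)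

lemma tripleEval_sum_sum_ι (x y : L) (s : Finset κ) (p q w : κ → κ → L) :
    tripleEval x y (∑ i ∈ s, ∑ j ∈ s, ιU (p i j) ⊗ₜ (ιU (q i j) ⊗ₜ ιU (w i j))) =
      ad R L (∑ i ∈ s, ∑ j ∈ s,
        (killingForm R L (p i j) x * killingForm R L (q i j) y) • w i j) := by
  simp only [tripleEval, map_sum, LinearMap.comp_apply, map_tmul, AlgHom.toLinearMap_apply,
    LinearEquiv.coe_coe, lid_tmul, killingPairing_ι, adU_ι, map_smul, mul_smul]

end Evaluation

section Operator

variable (R) in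
noncomputable def killingOperator (s : Finset κ) (a b : κ → L) : L →ₗ[R] L :=
  ∑ i ∈ s, (killingForm R L (a i)).smulRight (b i)

variable (s : Finset κ) (a b : κ → L)

local notation "K" => killingOperator R s a b

lemma killingOperator_apply (x : L) : K x = ∑ i ∈ s, killingForm R L (a i) x • b i := by
  simp [killingOperator]

lemma killingForm_killingOperator_lie (x z w : L) :
    killingForm R L ⁅K x, z⁆ w =
      ∑ i ∈ s, killingForm R L (a i) x * killingForm R L ⁅b i, z⁆ w := by
  simp [killingOperator_apply, sum_lie, smul_lie]

lemma tripleEval_lie_leg₁₃_leg₂₃ (x y : L) :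
    tripleEval x y ⁅leg₁₃ R s a b, leg₂₃ R s a b⁆ = ad R L ⁅K x, K y⁆ := by
  rw [lie_leg₁₃_leg₂₃, tripleEval_sum_sum_ι]
  simp only [killingOperator_apply, sum_lie_sum, smul_lie, lie_smul, smul_smul]
  exact congrArg _ <| Finset.sum_congr rfl fun i _ => Finset.sum_congr rfl fun j _ => by
    rw [mul_comm]

lemma tripleEval_lie_leg₁₂_leg₂₃ (x y : L) :
    tripleEval x y ⁅leg₁₂ R s a b, leg₂₃ R s a b⁆ = ad R L (-K ⁅K x, y⁆) := by
  rw [lie_leg₁₂_leg₂₃, tripleEval_sum_sum_ι, Finset.sum_comm, killingOperator_apply,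
    ← Finset.sum_neg_distrib]
  refine congrArg _ <| Finset.sum_congr rfl fun j _ => ?_
  rw [← Finset.sum_smul, ← killingForm_killingOperator_lie, ← neg_smul, ← lie_skew,
    map_neg, LinearMap.neg_apply, LieModule.traceForm_apply_lie_apply]

lemma tripleEval_lie_leg₁₂_leg₁₃ (hskew : ∑ i ∈ s, a i ⊗ₜ[R] b i = -∑ i ∈ s, b i ⊗ₜ[R] a i)
    (x y : L) : tripleEval x y ⁅leg₁₂ R s a b, leg₁₃ R s a b⁆ = ad R L (-K ⁅x, K y⁆) := by
  have hK : ∑ i ∈ s, killingForm R L (b i) y • a i = -K y := by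
    rw [killingOperator_apply]
    exact sum_apply_smul_of_skew hskew ((killingForm R L).flip y)
  rw [lie_leg₁₂_leg₁₃, tripleEval_sum_sum_ι, Finset.sum_comm, killingOperator_apply,
    ← Finset.sum_neg_distrib]
  refine congrArg _ <| Finset.sum_congr rfl fun j _ => ?_
  rw [← Finset.sum_smul, ← neg_smul]
  congr 1
  calc ∑ i ∈ s, killingForm R L ⁅a i, a j⁆ x * killingForm R L (b i) y
      = killingForm R L ⁅∑ i ∈ s, killingForm R L (b i) y • a i, a j⁆ x := by
        simp [sum_lie, smul_lie, mul_comm]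
    _ = -killingForm R L (a j) ⁅x, K y⁆ := by
        rw [hK, neg_lie, map_neg, LinearMap.neg_apply, LieModule.traceForm_comm,
          ← LieModule.traceForm_apply_lie_apply, LieModule.traceForm_comm]

theorem lie_killingOperator_of_yangBaxter [LieModule.IsFaithful R L L]
    (hskew : ∑ i ∈ s, a i ⊗ₜ[R] b i = -∑ i ∈ s, b i ⊗ₜ[R] a i)
    (hCYBE : ⁅leg₁₂ R s a b, leg₁₃ R s a b⁆ + ⁅leg₁₂ R s a b, leg₂₃ R s a b⁆ +
      ⁅leg₁₃ R s a b, leg₂₃ R s a b⁆ = 0) (x y : L) :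
    ⁅K x, K y⁆ = K (⁅K x, y⁆ + ⁅x, K y⁆) := by
  have hdefect := congrArg (tripleEval x y) hCYBE
  rw [map_add, map_add, tripleEval_lie_leg₁₂_leg₁₃ s a b hskew, tripleEval_lie_leg₁₂_leg₂₃,
    tripleEval_lie_leg₁₃_leg₂₃, ← map_add, ← map_add, map_zero, ← map_zero (ad R L)] at hdefect
  rw [← sub_eq_zero, ← LieModule.IsFaithful.injective_toEnd hdefect, map_add]
  abel

end Operator

end ClassicalYangBaxter

theorem cybe_gives_RB_weight_zero_general {g : Type*} [LieRing g] [LieAlgebra ℂ g]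
    [LieAlgebra.IsSemisimple ℂ g]
    {ι : Type*} (s : Finset ι) (a b : ι → g)
    (hskew : (∑ i ∈ s, a i ⊗ₜ[ℂ] b i) = - ∑ i ∈ s, b i ⊗ₜ[ℂ] a i)
    (r12 r13 r23 : UniversalEnvelopingAlgebra ℂ g ⊗[ℂ]
      (UniversalEnvelopingAlgebra ℂ g ⊗[ℂ] UniversalEnvelopingAlgebra ℂ g))
    (h12 : r12 = ∑ i ∈ s, UniversalEnvelopingAlgebra.ι ℂ (a i) ⊗ₜ
      (UniversalEnvelopingAlgebra.ι ℂ (b i) ⊗ₜ 1))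
    (h13 : r13 = ∑ i ∈ s, UniversalEnvelopingAlgebra.ι ℂ (a i) ⊗ₜ
      ((1 : UniversalEnvelopingAlgebra ℂ g) ⊗ₜ UniversalEnvelopingAlgebra.ι ℂ (b i)))
    (h23 : r23 = ∑ i ∈ s, (1 : UniversalEnvelopingAlgebra ℂ g) ⊗ₜ
      (UniversalEnvelopingAlgebra.ι ℂ (a i) ⊗ₜ UniversalEnvelopingAlgebra.ι ℂ (b i)))
    (hCYBE : ⁅r12, r13⁆ + ⁅r12, r23⁆ + ⁅r13, r23⁆ = 0)
    (R : g →ₗ[ℂ] g) (hR : ∀ x : g, R x = ∑ i ∈ s, killingForm ℂ g (a i) x • b i) :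
    ∀ x y : g, ⁅R x, R y⁆ = R (⁅R x, y⁆ + ⁅x, R y⁆) := by
  open ClassicalYangBaxter in
  obtain rfl : r12 = leg₁₂ ℂ s a b := h12
  obtain rfl : r13 = leg₁₃ ℂ s a b := h13
  obtain rfl : r23 = leg₂₃ ℂ s a b := h23
  obtain rfl : R = killingOperator ℂ s a b :=
    LinearMap.ext fun x => (hR x).trans (killingOperator_apply s a b x).symm
  exact lie_killingOperator_of_yangBaxter s a b hskew hCYBE

/-- A skew-symmetric solution of the classical Yang–Baxter equation on a
finite-dimensional semisimple complex Lie algebra `g` (with brackets computed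
via the universal enveloping algebra) gives rise to a Rota–Baxter operator of
weight 0 via the Killing form: `R(x) = Σ ⟨aᵢ, x⟩ • bᵢ`. -/
theorem cybe_gives_RB_weight_zero {g : Type*} [LieRing g] [LieAlgebra ℂ g]
    [FiniteDimensional ℂ g] [LieAlgebra.IsSemisimple ℂ g]
    {ι : Type*} (s : Finset ι) (a b : ι → g)
    (hskew : (∑ i ∈ s, a i ⊗ₜ[ℂ] b i) = - ∑ i ∈ s, b i ⊗ₜ[ℂ] a i)
    (r12 r13 r23 : UniversalEnvelopingAlgebra ℂ g ⊗[ℂ]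
      (UniversalEnvelopingAlgebra ℂ g ⊗[ℂ] UniversalEnvelopingAlgebra ℂ g))
    (h12 : r12 = ∑ i ∈ s, UniversalEnvelopingAlgebra.ι ℂ (a i) ⊗ₜ
      (UniversalEnvelopingAlgebra.ι ℂ (b i) ⊗ₜ 1))
    (h13 : r13 = ∑ i ∈ s, UniversalEnvelopingAlgebra.ι ℂ (a i) ⊗ₜ
      ((1 : UniversalEnvelopingAlgebra ℂ g) ⊗ₜ UniversalEnvelopingAlgebra.ι ℂ (b i)))
    (h23 : r23 = ∑ i ∈ s, (1 : UniversalEnvelopingAlgebra ℂ g) ⊗ₜ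
      (UniversalEnvelopingAlgebra.ι ℂ (a i) ⊗ₜ UniversalEnvelopingAlgebra.ι ℂ (b i)))
    (hCYBE : ⁅r12, r13⁆ + ⁅r12, r23⁆ + ⁅r13, r23⁆ = 0)
    (R : g →ₗ[ℂ] g) (hR : ∀ x : g, R x = ∑ i ∈ s, killingForm ℂ g (a i) x • b i) :
    ∀ x y : g, ⁅R x, R y⁆ = R (⁅R x, y⁆ + ⁅x, R y⁆) :=
  cybe_gives_RB_weight_zero_general s a b hskew r12 r13 r23 h12 h13 h23 hCYBE R hR
end

section
/- Let ⟨C, ≻⟩ be a precommutative (Zinbiel) algebra with basis B, and let I be the ideal of the polynomial algebra k[B] generated by the set {(b ≻ a)c − (b ≻ c)a : a,b,c ∈ B} (where b ≻ a, b ≻ c are expanded as linear combinations of B via the Zinbiel product). For each b ∈ B, the map ⊢_b: k[B]/I → k[B]/I induced on monomials by ⊢_b(a·w) = (b ≻ a)·w (a ∈ B, w a monomial) is well-defined, i.e. ⊢_b maps I into I. -/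
/-!
Modulo `I`, the polynomial `toPoly (x ≻ y) * toPoly z` is symmetric in `y` and `z`: by
trilinearity it suffices to check this on basis vectors, where it is a generator of `I`.

The value `(b ≻ a) w` assigned to a monomial `X a * w` does not depend on the variable `a` that is
split off: two factorisations `X a * p = X a' * p'` with `a ≠ a'` force `p = X a' * e` and
`p' = X a * e`, and the two values then differ by `e` times a generator. This defines `⊢_b` as a
linear map on `k[B]`. On a multiple `q ((b' ≻ a) c - (b' ≻ c) a)` of a generator it takes the value
`q ((b ≻ c) (b' ≻ a) - (b ≻ a) (b' ≻ c))`, which lies in `I` by the Zinbiel identity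
`b ≻ (b' ≻ x) = (b ≻ b' + b' ≻ b) ≻ x` and three applications of the symmetry above.
-/

open MvPolynomial

namespace MvPolynomial

variable {k B : Type*} [CommRing k] {J : Ideal (MvPolynomial B k)} {φ : B → MvPolynomial B k}

theorem sub_mem_of_X_mul_eq_X_mul [IsDomain k] (hφ : ∀ a c, φ a * X c - φ c * X a ∈ J)
    {a a' : B} {p p' : MvPolynomial B k} (h : X a * p = X a' * p') :
    φ a * p - φ a' * p' ∈ J := by
  obtain rfl | hne := eq_or_ne a a'
  · rw [mul_left_cancel₀ (X_ne_zero a) h, sub_self]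
    exact J.zero_mem
  obtain ⟨e, rfl⟩ : X a' ∣ p :=
    (X_prime.dvd_or_dvd ⟨p', h⟩).resolve_left (X_dvd_X.not.2 hne.symm)
  obtain rfl : p' = X a * e := mul_left_cancel₀ (X_ne_zero a') (by rw [← h]; ring)
  convert J.mul_mem_right e (hφ a a') using 1
  ring

theorem exists_linearMap_X_mul_eq [IsDomain k] (hφ : ∀ a c, φ a * X c - φ c * X a ∈ J) :
    ∃ T : MvPolynomial B k →ₗ[k] MvPolynomial B k ⧸ J,
      ∀ a w, T (X a * w) = Ideal.Quotient.mk J (φ a * w) := by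
  classical
  let f : (B →₀ ℕ) → MvPolynomial B k ⧸ J := fun d =>
    if h : ∃ (a : B) (p : MvPolynomial B k), monomial d 1 = X a * p then
      Ideal.Quotient.mk J (φ h.choose * h.choose_spec.choose) else 0
  have hf : ∀ d a (p : MvPolynomial B k), monomial d 1 = X a * p →
      f d = Ideal.Quotient.mk J (φ a * p) := by
    intro d a p h
    have h' : ∃ (a : B) (p : MvPolynomial B k), monomial d 1 = X a * p := ⟨a, p, h⟩
    simp only [f, dif_pos h']
    exact Ideal.Quotient.eq.2 <|
      sub_mem_of_X_mul_eq_X_mul hφ (h'.choose_spec.choose_spec.symm.trans h)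
  refine ⟨(basisMonomials B k).constr k f, fun a w => ?_⟩
  suffices (basisMonomials B k).constr k f ∘ₗ LinearMap.mulLeft k (X a) =
      (Ideal.Quotient.mkₐ k J).toLinearMap ∘ₗ LinearMap.mulLeft k (φ a) from
    LinearMap.congr_fun this w
  refine (basisMonomials B k).ext fun d => ?_
  have hX : X a * monomial d 1 = (monomial (Finsupp.single a 1 + d) 1 : MvPolynomial B k) := by
    rw [X, monomial_mul, one_mul]
  have hT : ∀ e, (basisMonomials B k).constr k f (monomial e 1) = f e :=
    (basisMonomials B k).constr_basis k f
  rw [LinearMap.comp_apply, LinearMap.mulLeft_apply, coe_basisMonomials, hX, hT, hf _ a _ hX.symm]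
  rfl

theorem map_mul_mul_X_sub_mul_X_eq_zero {T : MvPolynomial B k →ₗ[k] MvPolynomial B k ⧸ J}
    (hT : ∀ a w, T (X a * w) = Ideal.Quotient.mk J (φ a * w)) {ψ : B → MvPolynomial B k}
    {a c : B} (h : φ c * ψ a - φ a * ψ c ∈ J) (q : MvPolynomial B k) :
    T (q * (ψ a * X c - ψ c * X a)) = 0 := by
  rw [show q * (ψ a * X c - ψ c * X a) = X c * (q * ψ a) - X a * (q * ψ c) by ring, map_sub,
    hT, hT, ← map_sub, Ideal.Quotient.eq_zero_iff_mem]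
  convert J.mul_mem_left q h using 1
  ring

end MvPolynomial

section Quotient

variable {k R M : Type*} [CommRing k] [CommRing R] [Algebra k R] [AddCommGroup M] [Module k M]

theorem Ideal.map_eq_zero_of_mem_span {S : Set R} (f : R →ₗ[k] M)
    (h : ∀ q, ∀ g ∈ S, f (q * g) = 0) : ∀ x ∈ Ideal.span S, f x = 0 := by
  intro x hx
  simpa using Submodule.span_induction (p := fun x _ => ∀ q, f (q * x) = 0)
    (fun g hg q => h q g hg) (fun q => by simp) (fun x y _ _ hx hy q => by simp [mul_add, hx, hy])
    (fun r x _ hx q => by rw [smul_eq_mul, ← mul_assoc, hx]) hx 1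

theorem Ideal.exists_linearMap_mk_eq {I : Ideal R} (f : R →ₗ[k] M) (h : ∀ x ∈ I, f x = 0) :
    ∃ g : (R ⧸ I) →ₗ[k] M, ∀ x, g (Ideal.Quotient.mk I x) = f x :=
  ⟨(I.restrictScalars k).liftQ f h ∘ₗ
    (Submodule.Quotient.restrictScalarsEquiv k I).symm.toLinearMap, fun _ => rfl⟩

end Quotient

section Zinbiel

variable {k C : Type*} [CommRing k] [AddCommGroup C] [Module k C]

/-- `m x y` is the paper's `x ≻ y`. -/
def IsZinbiel (m : C →ₗ[k] C →ₗ[k] C) : Prop :=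
  ∀ x y z : C, m (m x y + m y x) z = m x (m y z)

theorem Module.Basis.mul_sub_mul_mem {ι R : Type*} [CommRing R] [Algebra k R]
    (bas : Module.Basis ι k C) (m : C →ₗ[k] C →ₗ[k] C) (f : C →ₗ[k] R) {J : Ideal R}
    (h : ∀ a b c, f (m (bas a) (bas b)) * f (bas c) - f (m (bas a) (bas c)) * f (bas b) ∈ J)
    (x y z : C) : f (m x y) * f z - f (m x z) * f y ∈ J := by
  let Ψ : C →ₗ[k] C →ₗ[k] C →ₗ[k] R ⧸ J := (m.compr₂ f).compr₂
    (((LinearMap.mul k R).compl₂ f).compr₂ (Ideal.Quotient.mkₐ k J).toLinearMap)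
  have hΨ : ∀ x y z, Ψ x y z = Ideal.Quotient.mk J (f (m x y) * f z) := fun _ _ _ => rfl
  have hsymm : Ψ = (LinearMap.lflip (R₀ := k)).toLinearMap ∘ₗ Ψ :=
    bas.ext fun a => LinearMap.ext_basis bas bas fun b c => by
      rw [LinearMap.comp_apply, LinearEquiv.coe_coe, LinearMap.lflip_apply, LinearMap.flip_apply,
        hΨ, hΨ, Ideal.Quotient.eq]
      exact h a b c
  rw [← Ideal.Quotient.eq, ← hΨ, ← hΨ]
  exact congrArg (fun F => F x y z) hsymm

theorem mul_sub_mul_mem_of_isZinbiel {R : Type*} [CommRing R] {J : Ideal R}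
    {m : C →ₗ[k] C →ₗ[k] C} (hm : IsZinbiel m) (f : C → R)
    (hJ : ∀ x y z, f (m x y) * f z - f (m x z) * f y ∈ J) (x y u v : C) :
    f (m x u) * f (m y v) - f (m x v) * f (m y u) ∈ J := by
  have h₁ := hJ x u (m y v)
  have h₂ := hJ (m x y + m y x) v u
  have h₃ := hJ x (m y u) v
  rw [hm, hm] at h₂
  convert J.add_mem (J.add_mem h₁ h₂) h₃ using 1
  ring

end Zinbiel

/-- Let `C` be a precommutative (Zinbiel) algebra with basis `B`, and `I` the
ideal of `k[B]` generated by `{(b ≻ a)c - (b ≻ c)a : a, b, c ∈ B}` (elements of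
`C` being expanded over `B` as linear polynomials). For every `b ∈ B`, the map
`⊢_b` induced on monomials by `⊢_b(a · w) = (b ≻ a) · w` is a well-defined
linear map on `k[B]/I`. -/
theorem vdash_well_defined {k C B : Type*} [Field k] [AddCommGroup C] [Module k C]
    (bas : Module.Basis B k C) (m : C →ₗ[k] C →ₗ[k] C)
    (hz : ∀ x y z : C, m (m x y + m y x) z = m x (m y z))
    (toPoly : C →ₗ[k] MvPolynomial B k)
    (htoPoly : ∀ c : C, toPoly c = (bas.repr c).sum fun x coef => MvPolynomial.C coef * X x)
    (I : Ideal (MvPolynomial B k))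
    (hI : I = Ideal.span { p | ∃ a b c : B,
      p = toPoly (m (bas b) (bas a)) * X c - toPoly (m (bas b) (bas c)) * X a }) :
    ∀ b : B, ∃ T : (MvPolynomial B k ⧸ I) →ₗ[k] (MvPolynomial B k ⧸ I),
      ∀ (a : B) (w : MvPolynomial B k),
        T (Ideal.Quotient.mk I (X a * w)) =
          Ideal.Quotient.mk I (toPoly (m (bas b) (bas a)) * w) := by
  intro b
  have hX : ∀ x, toPoly (bas x) = X x := fun x => by
    rw [htoPoly, bas.repr_self, Finsupp.sum_single_index] <;> simp
  have hgen : ∀ a b c, toPoly (m (bas b) (bas a)) * X c - toPoly (m (bas b) (bas c)) * X a ∈ I :=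
    fun a b c => by rw [hI]; exact Ideal.subset_span ⟨a, b, c, rfl⟩
  have hsymm := bas.mul_sub_mul_mem m toPoly (J := I) fun b' a c => by
    rw [hX, hX]
    exact hgen a b' c
  obtain ⟨T₀, hT₀⟩ := exists_linearMap_X_mul_eq (φ := fun a => toPoly (m (bas b) (bas a)))
    fun a c => hgen a b c
  have hker : ∀ p ∈ I, T₀ p = 0 := fun p hp => by
    refine Ideal.map_eq_zero_of_mem_span T₀ ?_ p (by rwa [hI] at hp)
    rintro q _ ⟨a, b', c, rfl⟩
    exact map_mul_mul_X_sub_mul_X_eq_zero hT₀ (ψ := fun a => toPoly (m (bas b') (bas a)))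
      (mul_sub_mul_mem_of_isZinbiel hz toPoly hsymm _ _ _ _) q
  obtain ⟨T, hT⟩ := Ideal.exists_linearMap_mk_eq T₀ hker
  exact ⟨T, fun a w => (hT _).trans (hT₀ a w)⟩
end
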